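/- If G is a finite group and G/Z(G) is isomorphic to the Frobenius group of order 42 with kernel C7 and complement C6, then |Cent(G)| = 9. -/

import Mathlib

/-- The set of distinct centralizers of elements of `G`. -/
def Cent (G : Type*) [Group G] : Set (Subgroup G) :=
  Set.range fun x : G => Subgroup.centralizer {x}

def addAutToMulAut (A : Type*) [AddGroup A] : Multiplicative (AddAut A) →* MulAut (Multiplicative A) where
  toFun f := AddEquiv.toMultiplicative (Multiplicative.toAdd f)
  map_one' := rfl
  map_mul' _ _ := rfl

/-- The action of `Aut(C7) ≅ C6` on `C7`. -/
def phi42 : (ZMod 7)ˣ →* MulAut (Multiplicative (ZMod 7)) :=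
  (addAutToMulAut (ZMod 7)).comp (DistribMulAction.toAddAut (ZMod 7)ˣ (ZMod 7))

/-- The Frobenius group `C7 ⋊ C6` of order 42, with `C6 ≅ Aut(C7)` acting faithfully. -/
abbrev F42 := Multiplicative (ZMod 7) ⋊[phi42] (ZMod 7)ˣ

def u2 : (ZMod 7)ˣ := ⟨2, 4, by decide, by decide⟩

def phi21 : ↥(Subgroup.zpowers u2) →* MulAut (Multiplicative (ZMod 7)) :=
  phi42.comp (Subgroup.zpowers u2).subtype

/-- The nonabelian group `C7 ⋊ C3` of order 21. -/
abbrev G21 := Multiplicative (ZMod 7) ⋊[phi21] ↥(Subgroup.zpowers u2)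

/-!
Every nontrivial element of the Frobenius group `F` of order 42 has a cyclic centralizer
(the kernel `C7`, or one of the seven complements `C6`). Let `π : G → G/Z(G) ≅ F`. The preimage
of a cyclic subgroup of `F` is a central extension of a cyclic group, hence abelian, so
`C_G(x) = π⁻¹(C_F(π x))` for every `x`. Thus `π⁻¹` is a bijection from `Cent F` onto `Cent G`,
and `F` has exactly `9` centralizers: `F`, `C7` and the seven complements.
-/

open Subgroup

section CentralExtension

variable {G Q : Type*} [Group G] [Group Q]

theorem Subgroup.centralizer_eq_comap_of_ker_le_center (f : G →* Q) (hf : f.ker ≤ center G)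
    (x : G) (hx : f x ≠ 1 → IsCyclic (centralizer {f x})) :
    centralizer {x} = (centralizer {f x}).comap f := by
  refine le_antisymm (fun y hy => ?_) (fun y hy => ?_)
  · rw [mem_centralizer_singleton_iff] at hy
    rw [mem_comap, mem_centralizer_singleton_iff, ← map_mul, hy, map_mul]
  by_cases hx1 : f x = 1
  · exact mem_centralizer_singleton_iff.mpr (mem_center_iff.mp (hf hx1) y)
  have : IsCyclic (centralizer {f x}) := hx hx1
  set P := (centralizer {f x}).comap f
  have hker : (f.subgroupComap (centralizer {f x})).ker ≤ center P := fun p hp =>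
    mem_center_iff.mpr fun q => Subtype.ext <|
      mem_center_iff.mp (hf (congrArg Subtype.val hp :)) q
  have hP := (f.subgroupComap _).isMulCommutative_of_isCyclic_of_ker_le_center hker
  have hxP : x ∈ P := mem_comap.mpr (mem_centralizer_singleton_iff.mpr rfl)
  exact mem_centralizer_singleton_iff.mpr
    (congrArg Subtype.val (hP.is_comm.comm ⟨y, hy⟩ ⟨x, hxP⟩))

theorem Cent_eq_image_comap (f : G →* Q) (hsurj : Function.Surjective f)
    (hf : f.ker ≤ center G) (hQ : ∀ q : Q, q ≠ 1 → IsCyclic (centralizer {q})) :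
    Cent G = comap f '' Cent Q := by
  have hcomap (x : G) := centralizer_eq_comap_of_ker_le_center f hf x (hQ (f x))
  ext H
  constructor
  · rintro ⟨x, rfl⟩
    exact ⟨_, ⟨f x, rfl⟩, (hcomap x).symm⟩
  · rintro ⟨_, ⟨q, rfl⟩, rfl⟩
    obtain ⟨x, rfl⟩ := hsurj q
    exact ⟨x, hcomap x⟩

theorem ncard_Cent_eq_of_ker_le_center (f : G →* Q) (hsurj : Function.Surjective f)
    (hf : f.ker ≤ center G) (hQ : ∀ q : Q, q ≠ 1 → IsCyclic (centralizer {q})) :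
    (Cent G).ncard = (Cent Q).ncard := by
  rw [Cent_eq_image_comap f hsurj hf hQ, Set.ncard_image_of_injective _ (comap_injective hsurj)]

end CentralExtension

theorem ncard_Cent_eq_card_image {G : Type*} [Group G] [Fintype G] [DecidableEq G] :
    (Cent G).ncard =
      (Finset.univ.image fun x : G => Finset.univ.filter fun y => y * x = x * y).card := by
  let c (x : G) : Finset G := Finset.univ.filter fun y => y * x = x * y
  have hc (x : G) : ((centralizer {x} : Subgroup G) : Set G) = c x := by
    ext y
    simp [c, mem_centralizer_singleton_iff]
  calc (Cent G).ncard
      = (SetLike.coe '' Cent G).ncard :=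
        (Set.ncard_image_of_injective _ SetLike.coe_injective).symm
    _ = ((fun s : Finset G => (s : Set G)) '' Set.range c).ncard := by
        simp only [Cent, ← Set.range_comp]
        exact congrArg _ (congrArg Set.range (funext hc))
    _ = (Finset.univ.image c).card := by
        rw [Set.ncard_image_of_injective _ Finset.coe_injective, ← Set.image_univ,
          ← Finset.coe_univ, ← Finset.coe_image, Set.ncard_coe_finset]

namespace F42

instance : Fintype F42 := Fintype.ofEquiv _ SemidirectProduct.equivProd.symm

-- Exponents below 7 suffice: the centralizer of a nontrivial element has order 6 or 7.
set_option maxRecDepth 10000 in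
theorem exists_generator_centralizer : ∀ x : F42, x ≠ 1 → ∃ g : F42, g * x = x * g ∧
    ∀ y : F42, y * x = x * y → ∃ n : Fin 7, g ^ (n : ℕ) = y := by
  decide

theorem isCyclic_centralizer (x : F42) (hx : x ≠ 1) : IsCyclic (centralizer {x}) := by
  obtain ⟨g, hgx, hg⟩ := exists_generator_centralizer x hx
  refine ⟨⟨g, mem_centralizer_singleton_iff.mpr hgx⟩, fun y => ?_⟩
  obtain ⟨n, hn⟩ := hg y (mem_centralizer_singleton_iff.mp y.2)
  exact ⟨n, Subtype.ext (by simpa using hn)⟩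

theorem ncard_Cent : (Cent F42).ncard = 9 := by
  rw [ncard_Cent_eq_card_image]
  decide

end F42

theorem stmt6_general (G : Type*) [Group G]
    (h : Nonempty ((G ⧸ Subgroup.center G) ≃* F42)) :
    (Cent G).ncard = 9 := by
  obtain ⟨e⟩ := h
  let π : G →* F42 := e.toMonoidHom.comp (QuotientGroup.mk' (center G))
  have hsurj : Function.Surjective π := e.surjective.comp (QuotientGroup.mk'_surjective _)
  have hker : π.ker = center G := by
    rw [MonoidHom.ker_comp_of_injective _ _ e.injective, QuotientGroup.ker_mk']
  rw [ncard_Cent_eq_of_ker_le_center π hsurj hker.le F42.isCyclic_centralizer, F42.ncard_Cent]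

theorem stmt6 (G : Type*) [Group G] [Finite G]
    (h : Nonempty ((G ⧸ Subgroup.center G) ≃* F42)) :
    (Cent G).ncard = 9 :=
  stmt6_general G h
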